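/- arXiv:2411.19364 — 2 statements merged into one kernel-verified Lean document; each statement's English description precedes it below -/
import Mathlib

section
/- For integers m₁ > m₂ ≥ 1, one has ‖2^{m₁}‖₂ = m₁ and ‖2^{m₁} + 2^{m₂}‖₂ = m₁ + 1, where ‖·‖₂ denotes 2-complexity. -/
/-- `CanRepr l n m` means `n` can be expressed using exactly `m` copies of `l`
    combined with addition and multiplication (and parentheses). -/
inductive CanRepr (l : ℕ) : ℕ → ℕ → Prop
  | base : CanRepr l l 1
  | add {a b p q : ℕ} : CanRepr l a p → CanRepr l b q → CanRepr l (a + b) (p + q)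
  | mul {a b p q : ℕ} : CanRepr l a p → CanRepr l b q → CanRepr l (a * b) (p + q)

/-- The `l`-complexity `‖n‖_l`: the minimal number of `l`'s needed to express `n`
    using only addition and multiplication. (By convention `sInf ∅ = 0`.) -/
noncomputable def complexity (l n : ℕ) : ℕ := sInf {m | CanRepr l n m}

/-!
An expression with `m` copies of `l ≥ 2` has value at most `l ^ m`, because `a + b ≤ a * b`
once `a, b ≥ 2`. Hence `‖n‖_l ≥ log_l n`, which gives the lower bounds `m₁` and `m₁ + 1`.
They are attained by `2 ^ m₁ = 2 * ⋯ * 2` and `2 ^ m₁ + 2 ^ m₂ = 2 ^ (m₂ - 1) * (2 ^ (m₁ - m₂ + 1) + 2)`.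
-/

namespace CanRepr

variable {l : ℕ}

theorem pos {n m : ℕ} (h : CanRepr l n m) : 0 < m := by
  induction h <;> omega

theorem le_pow {n m : ℕ} (hl : 2 ≤ l) (h : CanRepr l n m) : n ≤ l ^ m := by
  induction h with
  | base => simp
  | @add a b p q ha hb iha ihb =>
    have two_le_pow {k : ℕ} (hk : 0 < k) : 2 ≤ l ^ k :=
      hl.trans (Nat.le_self_pow hk.ne' l)
    calc a + b ≤ l ^ p + l ^ q := Nat.add_le_add iha ihb
      _ ≤ l ^ p * l ^ q := Nat.add_le_mul (two_le_pow ha.pos) (two_le_pow hb.pos)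
      _ = l ^ (p + q) := (pow_add l p q).symm
  | @mul a b p q _ _ iha ihb =>
    calc a * b ≤ l ^ p * l ^ q := Nat.mul_le_mul iha ihb
      _ = l ^ (p + q) := (pow_add l p q).symm

theorem pow {m : ℕ} (hm : 0 < m) : CanRepr l (l ^ m) m := by
  induction m with
  | zero => omega
  | succ k ih =>
    rcases Nat.eq_zero_or_pos k with rfl | hk
    · simpa using base
    · simpa [pow_succ] using (ih hk).mul base

theorem pow_mul {a p : ℕ} (k : ℕ) (h : CanRepr l a p) : CanRepr l (l ^ k * a) (k + p) := by
  induction k with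
  | zero => simpa using h
  | succ j ih => convert base.mul ih using 1 <;> ring

theorem pow_add_pow {m₁ m₂ : ℕ} (h₁ : 0 < m₂) (h₂ : m₂ ≤ m₁) :
    CanRepr l (l ^ m₁ + l ^ m₂) (m₁ + 1) := by
  obtain ⟨d, rfl⟩ := Nat.exists_eq_add_of_le h₂
  obtain ⟨j, rfl⟩ : ∃ j, m₂ = j + 1 := ⟨m₂ - 1, by omega⟩
  convert pow_mul j ((pow (m := d + 1) d.succ_pos).add base) using 1 <;> ring

end CanRepr

theorem complexity_eq_of_canRepr {l n m : ℕ} (h : CanRepr l n m)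
    (hmin : ∀ k, CanRepr l n k → m ≤ k) : complexity l n = m :=
  le_antisymm (Nat.sInf_le h) (hmin _ (Nat.sInf_mem ⟨m, h⟩))

theorem stmt_5 (m₁ m₂ : ℕ) (h : m₂ < m₁) (h' : 1 ≤ m₂) :
    complexity 2 (2 ^ m₁) = m₁ ∧ complexity 2 (2 ^ m₁ + 2 ^ m₂) = m₁ + 1 := by
  constructor
  · refine complexity_eq_of_canRepr (.pow (by omega)) fun k hk => ?_
    exact (Nat.pow_le_pow_iff_right (by norm_num)).mp (hk.le_pow le_rfl)
  · refine complexity_eq_of_canRepr (.pow_add_pow h' h.le) fun k hk => ?_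
    have hlt : 2 ^ m₁ < 2 ^ k := by
      have := hk.le_pow le_rfl
      have : 0 < 2 ^ m₂ := by positivity
      omega
    exact (Nat.pow_lt_pow_iff_right (by norm_num)).mp hlt
end

section
/- Let n be a positive even integer and let m = ⌈log₂ n⌉ − 1, so that 2^m < n ≤ 2^{m+1}, with m ≥ 1. Then ‖n‖₂ = m + 1 if and only if n = 2^{m+1} or n = 2^m + 2^t for some integer t with 1 ≤ t < m. -/
/-- The numbers `n` with `2 ^ p < n` that can be written with `p + 1` twos. -/
def IsExtremal (p n : ℕ) : Prop :=
  n = 2 ^ (p + 1) ∨ ∃ t, 1 ≤ t ∧ t < p ∧ n = 2 ^ p + 2 ^ t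

section CanRepr

variable {l n p : ℕ}

theorem CanRepr.one_le (h : CanRepr l n p) : 1 ≤ p := by
  induction h <;> omega

theorem CanRepr.dvd (h : CanRepr l n p) : l ∣ n := by
  induction h with
  | base => exact dvd_rfl
  | add _ _ iha ihb => exact dvd_add iha ihb
  | mul _ _ iha _ => exact iha.mul_right _

theorem CanRepr.eq_of_one (h : CanRepr l n 1) : n = l := by
  generalize hp : 1 = p at h
  cases h with
  | base => rfl
  | add ha hb | mul ha hb => have := ha.one_le; have := hb.one_le; omega

theorem CanRepr.le_pow_s6 (hl : 2 ≤ l) (h : CanRepr l n p) : n ≤ l ^ p := by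
  induction h with
  | base => simp
  | @add a b p q ha hb iha ihb =>
    calc a + b ≤ l ^ p + l ^ q := add_le_add iha ihb
      _ ≤ l ^ p * l ^ q :=
        add_le_mul (hl.trans (le_self_pow₀ (by omega) (by have := ha.one_le; omega)))
          (hl.trans (le_self_pow₀ (by omega) (by have := hb.one_le; omega)))
      _ = l ^ (p + q) := (pow_add l p q).symm
  | @mul a b p q _ _ iha ihb => exact (Nat.mul_le_mul iha ihb).trans_eq (pow_add l p q).symm

theorem CanRepr.pow_mul_s6 (h : CanRepr l n p) (k : ℕ) : CanRepr l (l ^ k * n) (k + p) := by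
  induction k with
  | zero => simpa using h
  | succ k ih =>
    have := ih.mul (CanRepr.base (l := l))
    rwa [show l ^ k * n * l = l ^ (k + 1) * n by ring, show k + p + 1 = k + 1 + p by ring] at this

theorem CanRepr.pow_s6 {k : ℕ} (hk : 1 ≤ k) : CanRepr l (l ^ k) k := by
  obtain ⟨j, rfl⟩ := Nat.exists_eq_add_of_le' hk
  simpa [pow_succ] using (CanRepr.base (l := l)).pow_mul_s6 j

theorem CanRepr.pow_add_pow_s6 {m t : ℕ} (ht : 1 ≤ t) (htm : t < m) :
    CanRepr l (l ^ m + l ^ t) (m + 1) := by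
  obtain ⟨s, rfl⟩ := Nat.exists_eq_add_of_le' ht
  obtain ⟨u, rfl⟩ := Nat.exists_eq_add_of_le' htm.le
  have h := ((CanRepr.pow_s6 (l := l) (k := u + 1) (by omega)).add .base).pow_mul_s6 s
  rwa [show l ^ s * (l ^ (u + 1) + l) = l ^ (u + s + 1) + l ^ (s + 1) by ring,
    show s + (u + 1 + 1) = u + s + 1 + 1 by ring] at h

theorem CanRepr.complexity_le (h : CanRepr l n p) : complexity l n ≤ p :=
  Nat.sInf_le h

theorem CanRepr.canRepr_complexity (h : CanRepr l n p) : CanRepr l n (complexity l n) :=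
  Nat.sInf_mem ⟨p, h⟩

theorem canRepr_complexity_of_ne_zero (h : complexity l n ≠ 0) :
    CanRepr l n (complexity l n) :=
  Nat.sInf_mem (Nat.nonempty_of_pos_sInf (Nat.pos_of_ne_zero h))

end CanRepr

section IsExtremal

variable {p q r a b n : ℕ}

theorem IsExtremal.canRepr (h : IsExtremal p n) : CanRepr 2 n (p + 1) := by
  rcases h with rfl | ⟨t, ht, htp, rfl⟩
  · exact CanRepr.pow_s6 (by omega)
  · exact CanRepr.pow_add_pow_s6 ht htp

theorem IsExtremal.two_pow_mul (h : IsExtremal r b) (q : ℕ) :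
    IsExtremal (q + r + 1) (2 ^ (q + 1) * b) := by
  rcases h with rfl | ⟨t, ht, htr, rfl⟩
  · left; ring
  · right; exact ⟨q + 1 + t, by omega, by omega, by ring⟩

theorem eq_succ_of_two_pow_lt_mul {s t : ℕ} (hs : s < q) (ht : t < r)
    (h : 2 ^ (q + r + 1) < (2 ^ q + 2 ^ s) * (2 ^ r + 2 ^ t)) : q = s + 1 := by
  by_contra hne
  have hq : 4 * 2 ^ s ≤ 2 ^ q := by
    rw [show 4 * 2 ^ s = 2 ^ (s + 2) by ring]
    exact Nat.pow_le_pow_right (by norm_num) (by omega)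
  have hr : 2 * 2 ^ t ≤ 2 ^ r := by
    rw [← pow_succ']
    exact Nat.pow_le_pow_right (by norm_num) ht
  rw [show 2 ^ (q + r + 1) = 2 * 2 ^ q * 2 ^ r by ring] at h
  -- the product is at most `(5 / 4) * (3 / 2) * 2 ^ (q + r) < 2 * 2 ^ (q + r)`
  nlinarith [Nat.mul_le_mul_left (2 ^ q) hr, Nat.mul_le_mul_right (2 ^ r) hq,
    Nat.mul_le_mul hq hr, Nat.mul_pos (Nat.two_pow_pos q) (Nat.two_pow_pos r)]

theorem IsExtremal.mul (ha : IsExtremal q a) (hb : IsExtremal r b) (h : 2 ^ (q + r + 1) < a * b) :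
    IsExtremal (q + r + 1) (a * b) := by
  rcases ha with rfl | ⟨s, hs, hsq, rfl⟩
  · exact hb.two_pow_mul q
  rcases hb with rfl | ⟨t, ht, htr, rfl⟩
  · rw [mul_comm, show q + r + 1 = r + q + 1 by ring]
    exact IsExtremal.two_pow_mul (Or.inr ⟨s, hs, hsq, rfl⟩) r
  have hq := eq_succ_of_two_pow_lt_mul hsq htr h
  have hr := eq_succ_of_two_pow_lt_mul htr hsq (by rw [mul_comm]; convert h using 2; ring)
  subst hq hr
  right; exact ⟨s + t, by omega, by omega, by ring⟩

theorem CanRepr.isExtremal_add (ha : CanRepr 2 a (q + 1)) (hb : CanRepr 2 b (r + 1))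
    (h : 2 ^ (q + r + 1) < a + b) : IsExtremal (q + r + 1) (a + b) := by
  wlog hr : r = 0 generalizing a b q r
  · have hq : q = 0 := by
      by_contra hq
      have ha_le : a ≤ 2 ^ (q + r) :=
        (ha.le_pow_s6 le_rfl).trans (Nat.pow_le_pow_right (by norm_num) (by omega))
      have hb_le : b ≤ 2 ^ (q + r) :=
        (hb.le_pow_s6 le_rfl).trans (Nat.pow_le_pow_right (by norm_num) (by omega))
      rw [pow_succ] at h
      omega
    subst hq
    rw [add_comm a b, show 0 + r + 1 = r + 0 + 1 by ring] at *
    exact this hb ha h rfl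
  subst hr
  simp only [add_zero] at h ⊢
  obtain rfl : b = 2 := hb.eq_of_one
  have ha_le := ha.le_pow_s6 le_rfl
  have ha_even := ha.dvd
  have hpow_even : 2 ∣ 2 ^ (q + 1) := dvd_pow_self 2 (by omega)
  obtain rfl : a = 2 ^ (q + 1) := by omega
  rcases Nat.eq_zero_or_pos q with rfl | hq
  · left; rfl
  · right; exact ⟨1, le_rfl, by omega, by simp⟩

theorem CanRepr.isExtremal (h : CanRepr 2 n (p + 1)) (hlt : 2 ^ p < n) : IsExtremal p n := by
  generalize hc : p + 1 = c at h
  induction h generalizing p with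
  | base =>
    obtain rfl : p = 0 := by omega
    left; rfl
  | @add a b q r ha hb _ _ =>
    obtain ⟨q, rfl⟩ := Nat.exists_eq_add_of_le' ha.one_le
    obtain ⟨r, rfl⟩ := Nat.exists_eq_add_of_le' hb.one_le
    obtain rfl : p = q + r + 1 := by omega
    exact ha.isExtremal_add hb hlt
  | @mul a b q r ha hb iha ihb =>
    obtain ⟨q, rfl⟩ := Nat.exists_eq_add_of_le' ha.one_le
    obtain ⟨r, rfl⟩ := Nat.exists_eq_add_of_le' hb.one_le
    obtain rfl : p = q + r + 1 := by omega
    have hqa : 2 ^ q < a := by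
      by_contra! hle
      have := Nat.mul_le_mul hle (hb.le_pow_s6 le_rfl)
      rw [← pow_add, ← add_assoc] at this
      omega
    have hrb : 2 ^ r < b := by
      by_contra! hle
      have := Nat.mul_le_mul (ha.le_pow_s6 le_rfl) hle
      rw [← pow_add, add_right_comm] at this
      omega
    exact (iha hqa rfl).mul (ihb hrb rfl) hlt

end IsExtremal

theorem stmt_6_general (m n : ℕ) (hlb : 2 ^ m < n) :
    complexity 2 n = m + 1 ↔
      n = 2 ^ (m + 1) ∨ ∃ t, 1 ≤ t ∧ t < m ∧ n = 2 ^ m + 2 ^ t := by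
  constructor
  · intro h
    have hrep : CanRepr 2 n (m + 1) := h ▸ canRepr_complexity_of_ne_zero (by omega)
    exact hrep.isExtremal hlb
  · intro h
    have hrep : CanRepr 2 n (m + 1) := IsExtremal.canRepr h
    have hbound : n ≤ 2 ^ complexity 2 n := hrep.canRepr_complexity.le_pow_s6 le_rfl
    have hlt : m < complexity 2 n :=
      (Nat.pow_lt_pow_iff_right (by norm_num)).mp (hlb.trans_le hbound)
    exact le_antisymm hrep.complexity_le hlt

theorem stmt_6 (m n : ℕ) (hm : 1 ≤ m) (hn : 0 < n) (heven : 2 ∣ n)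
    (hlb : 2 ^ m < n) (hub : n ≤ 2 ^ (m + 1)) :
    complexity 2 n = m + 1 ↔
      n = 2 ^ (m + 1) ∨ ∃ t, 1 ≤ t ∧ t < m ∧ n = 2 ^ m + 2 ^ t :=
  stmt_6_general m n hlb
end
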